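/- arXiv:2601.03126 — 4 statements merged into one kernel-verified Lean document; each statement's English description precedes it below -/
import Mathlib

section
/- Let A be a finite abelian group. Then there exists at least one symmetric duality of A, i.e., a group isomorphism φ : A → Â satisfying φ(a)(b) = φ(b)(a) for all a, b ∈ A. -/
/-! A symmetric duality is the same as a symmetric nondegenerate `ℂˣ`-valued bicharacter. On
`ZMod n` the pairing `(x, y) ↦ exp (2πi x y / n)` is one; products of such pairings over the
factors of `A ≅ ∏ᵢ ZMod nᵢ` give one on `A`, and it transports along the isomorphism. For a finite
group, nondegeneracy alone makes `φ` bijective, since `Â` has at most `|A|` elements. -/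

/-- A duality of a finite abelian group `A`: a group isomorphism from `A` to its
character group `Â = AddChar A ℂˣ`, encoded as a bijective map respecting the operations. -/
def IsDuality {A : Type*} [AddCommGroup A] (φ : A → AddChar A ℂˣ) : Prop :=
  Function.Bijective φ ∧ ∀ a b : A, φ (a + b) = φ a * φ b

open Function

def HasSymmetricDuality (A : Type*) [AddCommGroup A] : Prop :=
  ∃ φ : A → AddChar A ℂˣ, IsDuality φ ∧ ∀ a b : A, φ a b = φ b a

namespace AddChar

section Pi

variable {ι M : Type*} [Fintype ι] [CommMonoid M] {A : ι → Type*} [∀ i, AddMonoid (A i)]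

def pi (ψ : ∀ i, AddChar (A i) M) : AddChar (∀ i, A i) M :=
  ∏ i, (ψ i).compAddMonoidHom (Pi.evalAddMonoidHom A i)

lemma pi_apply (ψ : ∀ i, AddChar (A i) M) (x : ∀ i, A i) : pi ψ x = ∏ i, ψ i (x i) := by
  simp [pi, prod_apply]

lemma pi_apply_single [DecidableEq ι] (ψ : ∀ i, AddChar (A i) M) (i : ι) (a : A i) :
    pi ψ (Pi.single i a) = ψ i a := by
  rw [pi_apply, Finset.prod_eq_single i (fun j _ hj => by simp [hj]) (by simp), Pi.single_eq_same]

lemma pi_injective : Injective (pi : (∀ i, AddChar (A i) M) → AddChar (∀ i, A i) M) := by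
  classical
  intro ψ χ h
  ext i a
  simpa only [pi_apply_single] using DFunLike.congr_fun h (Pi.single i a)

end Pi

variable {A : Type*} [AddCommGroup A]

lemma card_addChar_units_le [Finite A] : Nat.card (AddChar A ℂˣ) ≤ Nat.card A := by
  cases nonempty_fintype A
  calc Nat.card (AddChar A ℂˣ)
      ≤ Nat.card (AddChar A ℂ) := Nat.card_le_card_of_injective _
        ((Units.coeHom ℂ).compAddChar_injective_right Units.val_injective)
    _ ≤ Nat.card A := by simpa only [Nat.card_eq_fintype_card] using card_addChar_le A ℂ

lemma zmod_comm {n : ℕ} [NeZero n] (x y : ZMod n) : zmod n x y = zmod n y x := by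
  obtain ⟨x, rfl⟩ := ZMod.intCast_surjective x
  obtain ⟨y, rfl⟩ := ZMod.intCast_surjective y
  simp [mul_comm]

end AddChar

lemma IsDuality.of_injective {A : Type*} [AddCommGroup A] [Finite A] {φ : A → AddChar A ℂˣ}
    (hinj : Injective φ) (hadd : ∀ a b : A, φ (a + b) = φ a * φ b) : IsDuality φ := by
  have : Finite (AddChar A ℂˣ) := Finite.of_injective _
    ((Units.coeHom ℂ).compAddChar_injective_right Units.val_injective)
  exact ⟨(Nat.bijective_iff_injective_and_card φ).2
    ⟨hinj, (Nat.card_le_card_of_injective φ hinj).antisymm AddChar.card_addChar_units_le⟩, hadd⟩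

lemma HasSymmetricDuality.of_addEquiv {A B : Type*} [AddCommGroup A] [AddCommGroup B]
    (e : A ≃+ B) (h : HasSymmetricDuality B) : HasSymmetricDuality A := by
  obtain ⟨φ, ⟨hbij, hadd⟩, hsymm⟩ := h
  let pullback (ψ : AddChar B ℂˣ) : AddChar A ℂˣ := ψ.compAddMonoidHom e
  have hpullback : Bijective pullback := by
    refine ⟨AddChar.compAddMonoidHom_injective_left _ e.surjective, fun ψ => ?_⟩
    exact ⟨ψ.compAddMonoidHom e.symm, by ext; simp [pullback]⟩
  refine ⟨fun a => pullback (φ (e a)), ⟨hpullback.comp (hbij.comp e.bijective), ?_⟩,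
    fun a b => hsymm (e a) (e b)⟩
  intro a b
  ext
  simp [pullback, hadd]

lemma hasSymmetricDuality_zmod (n : ℕ) [NeZero n] : HasSymmetricDuality (ZMod n) := by
  refine ⟨fun x => Circle.toUnits.compAddChar (AddChar.zmod n x), .of_injective ?_ ?_, ?_⟩
  · exact (Circle.toUnits.compAddChar_injective_right unitSphereToUnits_injective).comp
      AddChar.zmod_injective
  · intro x y
    ext
    simp
  · intro x y
    simp [AddChar.zmod_comm]

lemma hasSymmetricDuality_pi {ι : Type*} [Fintype ι] {A : ι → Type*} [∀ i, AddCommGroup (A i)]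
    [∀ i, Finite (A i)] (h : ∀ i, HasSymmetricDuality (A i)) :
    HasSymmetricDuality (∀ i, A i) := by
  choose φ hφ hsymm using h
  refine ⟨fun x => AddChar.pi fun i => φ i (x i), .of_injective ?_ ?_, ?_⟩
  · exact AddChar.pi_injective.comp fun x y hxy => funext fun i => (hφ i).1.1 (congrFun hxy i)
  · intro x y
    ext z
    simp [AddChar.pi_apply, (hφ _).2, Finset.prod_mul_distrib]
  · intro x y
    simp only [AddChar.pi_apply, hsymm]

/-- Every finite abelian group admits at least one symmetric duality. -/
theorem exists_symmetric_duality (A : Type*) [AddCommGroup A] [Fintype A] :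
    ∃ φ : A → AddChar A ℂˣ, IsDuality φ ∧ ∀ a b : A, φ a b = φ b a := by
  obtain ⟨ι, _, n, hn, ⟨e⟩⟩ := AddCommGroup.equiv_directSum_zmod_of_finite' A
  have (i : ι) : NeZero (n i) := ⟨by have := hn i; omega⟩
  exact (hasSymmetricDuality_pi fun i => hasSymmetricDuality_zmod (n i)).of_addEquiv
    (e.trans (DirectSum.linearEquivFunOnFintype ℤ ι _).toAddEquiv)
end

section
/- Let A be a finite abelian group, φ a duality of A extended coordinatewise to Aⁿ, and C ⊆ Aⁿ an additive code. Then C ⊆ 𝔏_φ(C) if and only if C ⊆ ℜ_φ(C) (left self-orthogonal iff right self-orthogonal), and C = 𝔏_φ(C) if and only if C = ℜ_φ(C) (left self-dual iff right self-dual). -/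
/-- The left dual of a set `S ⊆ Aⁿ` with respect to the coordinatewise extension of `φ`. -/
def lDual {A : Type*} [AddCommGroup A] {n : ℕ} (φ : A → AddChar A ℂˣ)
    (S : Set (Fin n → A)) : Set (Fin n → A) :=
  {x | ∀ c ∈ S, (∏ i, φ (x i) (c i)) = 1}

/-- The right dual of a set `S ⊆ Aⁿ` with respect to the coordinatewise extension of `φ`. -/
def rDual {A : Type*} [AddCommGroup A] {n : ℕ} (φ : A → AddChar A ℂˣ)
    (S : Set (Fin n → A)) : Set (Fin n → A) :=
  {x | ∀ c ∈ S, (∏ i, φ (c i) (x i)) = 1}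

/-
The transposed pairing is realised by a bijection `σ = hφ.transpose` of `A` with
`φ (σ a) b = φ b a`: it exists because `φ` is onto `Â`, and it is injective because characters
separate points. Hence `ℜ_φ(C)` is the preimage of `𝔏_φ(C)` under the coordinatewise bijection
induced by `σ`, so the two duals have the same size. Self-orthogonality is symmetric by
definition, and a self-orthogonal code equal to one of its duals is therefore equal to the other.
-/

open Function

section

variable {A : Type*} [AddCommGroup A]

theorem AddChar.eq_of_forall_apply_eq_units [Finite A] {a b : A}
    (h : ∀ χ : AddChar A ℂˣ, χ a = χ b) : a = b := by
  have : NeZero (Monoid.exponent (Multiplicative A)) := ⟨Monoid.exponent_ne_zero_of_finite⟩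
  exact Multiplicative.ofAdd.injective <|
    (CommGroup.forall_apply_eq_apply_iff (Multiplicative A) (M := ℂ)).1 fun ψ ↦
      h (AddChar.toMonoidHomEquiv.symm ψ)

theorem subset_lDual_iff_subset_rDual {n : ℕ} (φ : A → AddChar A ℂˣ) (S : Set (Fin n → A)) :
    S ⊆ lDual φ S ↔ S ⊆ rDual φ S :=
  ⟨fun h _ hx _ hc ↦ h hc _ hx, fun h _ hx _ hc ↦ h hc _ hx⟩

namespace IsDuality

variable {φ : A → AddChar A ℂˣ}

theorem map_zero_apply (hφ : IsDuality φ) (a : A) : φ 0 a = 1 :=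
  left_eq_mul.1 <| by rw [← AddChar.mul_apply, ← hφ.2 0 0, add_zero]

def evalChar (hφ : IsDuality φ) (a : A) : AddChar A ℂˣ where
  toFun b := φ b a
  map_zero_eq_one' := hφ.map_zero_apply a
  map_add_eq_mul' b b' := by rw [hφ.2, AddChar.mul_apply]

noncomputable def transpose (hφ : IsDuality φ) (a : A) : A :=
  (Equiv.ofBijective φ hφ.1).symm (hφ.evalChar a)

theorem apply_transpose (hφ : IsDuality φ) (a b : A) : φ (hφ.transpose a) b = φ b a :=
  DFunLike.congr_fun ((Equiv.ofBijective φ hφ.1).apply_symm_apply _) b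

theorem transpose_injective [Finite A] (hφ : IsDuality φ) : Injective hφ.transpose := by
  intro a a' h
  have hpair : ∀ b, φ b a = φ b a' := fun b ↦ by rw [← hφ.apply_transpose, h, hφ.apply_transpose]
  refine AddChar.eq_of_forall_apply_eq_units fun χ ↦ ?_
  obtain ⟨b, rfl⟩ := hφ.1.2 χ
  exact hpair b

theorem rDual_eq_preimage_lDual {n : ℕ} (hφ : IsDuality φ) (S : Set (Fin n → A)) :
    rDual φ S = (hφ.transpose ∘ ·) ⁻¹' lDual φ S := by
  ext x
  simp only [rDual, lDual, Set.mem_ofPred_eq, Set.mem_preimage, comp_apply, hφ.apply_transpose]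

theorem ncard_rDual [Finite A] {n : ℕ} (hφ : IsDuality φ) (S : Set (Fin n → A)) :
    (rDual φ S).ncard = (lDual φ S).ncard := by
  have hinj : Injective (hφ.transpose ∘ · : (Fin n → A) → Fin n → A) :=
    hφ.transpose_injective.comp_left
  rw [hφ.rDual_eq_preimage_lDual, Set.ncard_preimage_of_injective_subset_range hinj
    (by rw [(Finite.injective_iff_surjective.1 hinj).range_eq]; exact Set.subset_univ _)]

theorem eq_lDual_iff_eq_rDual [Finite A] {n : ℕ} (hφ : IsDuality φ) (S : Set (Fin n → A)) :
    S = lDual φ S ↔ S = rDual φ S := by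
  constructor
  · intro hL
    refine Set.eq_of_subset_of_ncard_le ((subset_lDual_iff_subset_rDual φ S).1 hL.subset) ?_
    rw [hφ.ncard_rDual, ← hL]
  · intro hR
    refine Set.eq_of_subset_of_ncard_le ((subset_lDual_iff_subset_rDual φ S).2 hR.subset) ?_
    rw [← hφ.ncard_rDual, ← hR]

end IsDuality

end

/-- An additive code is left self-orthogonal iff it is right self-orthogonal, and
left self-dual iff right self-dual. -/
theorem self_orthogonal_and_self_dual_left_iff_right {A : Type*} [AddCommGroup A] [Fintype A]
    {n : ℕ} (φ : A → AddChar A ℂˣ) (hφ : IsDuality φ) (C : AddSubgroup (Fin n → A)) :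
    ((C : Set (Fin n → A)) ⊆ lDual φ (C : Set (Fin n → A)) ↔
      (C : Set (Fin n → A)) ⊆ rDual φ (C : Set (Fin n → A))) ∧
    ((C : Set (Fin n → A)) = lDual φ (C : Set (Fin n → A)) ↔
      (C : Set (Fin n → A)) = rDual φ (C : Set (Fin n → A))) :=
  ⟨subset_lDual_iff_subset_rDual φ _, hφ.eq_lDual_iff_eq_rDual _⟩
end

section
/- (Poisson summation formula) Let A be a finite abelian group, H ⊆ A a subgroup, V a complex vector space, and f : A → V any function. Let f̂ : Â → V denote the Fourier transform f̂(π) = ∑_{a ∈ A} π(a) • f(a) (the sum over all a ∈ A of the scalar π(a) ∈ ℂˣ acting on f(a)). Then ∑_{h ∈ H} f(h) = (|H| / |A|) • ∑_{π ∈ (Â : H)} f̂(π), where the second sum runs over the annihilator (Â : H). -/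
/-!
Characters of `A` trivial on `H` are exactly the characters of `A ⧸ H`, so orthogonality of
characters on `A ⧸ H` gives `∑_{π ∈ (Â : H)} π(a) = |A ⧸ H|` for `a ∈ H` and `0` otherwise.
Exchanging the two sums in `∑_{π ∈ (Â : H)} f̂(π)` therefore yields `|A ⧸ H| • ∑_{h ∈ H} f(h)`,
and `|A| = |H| · |A ⧸ H|`.
-/

/-- The Fourier transform of a function `f : A → V`, evaluated at a character `π`:
`f̂(π) = ∑_{a ∈ A} π(a) • f(a)`. -/
noncomputable def fourierTransform {A : Type*} [AddCommGroup A] [Fintype A]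
    {V : Type*} [AddCommGroup V] [Module ℂ V] (f : A → V) (π : AddChar A ℂˣ) : V :=
  ∑ a : A, ((π a : ℂ) • f a)

namespace AddChar

variable {A M : Type*} [AddCommGroup A] [CommMonoid M]

def annihilator (H : AddSubgroup A) : Set (AddChar A M) := {ψ | ∀ h ∈ H, ψ h = 1}

def quotientEquivAnnihilator (H : AddSubgroup A) :
    AddChar (A ⧸ H) M ≃ annihilator (M := M) H where
  toFun ψ := ⟨ψ.compAddMonoidHom (QuotientAddGroup.mk' H), fun h hh => by
    simp [(QuotientAddGroup.eq_zero_iff h).2 hh]⟩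
  invFun ψ := toAddMonoidHomEquiv.symm <|
    QuotientAddGroup.lift H (toAddMonoidHomEquiv ψ.1) fun h hh => by
      simp [ψ.2 h hh]
  left_inv ψ := by ext q; induction q using QuotientAddGroup.induction_on; rfl
  right_inv ψ := rfl

def unitsEquiv : AddChar A Mˣ ≃ AddChar A M :=
  toMonoidHomEquiv.trans <| MonoidHom.toHomUnitsMulEquiv.symm.toEquiv.trans toMonoidHomEquiv.symm

lemma finsum_mem_annihilator_apply [Finite A] (H : AddSubgroup A) (a : A) [Decidable (a ∈ H)] :
    ∑ᶠ ψ ∈ annihilator (M := ℂˣ) H, (ψ a : ℂ) = if a ∈ H then (Nat.card (A ⧸ H) : ℂ) else 0 := by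
  classical
  have : Fintype (A ⧸ H) := Fintype.ofFinite _
  calc ∑ᶠ ψ ∈ annihilator (M := ℂˣ) H, (ψ a : ℂ)
      = ∑ᶠ ψ : AddChar (A ⧸ H) ℂˣ, (ψ a : ℂ) := by
        rw [← finsum_set_coe_eq_finsum_mem, ← finsum_comp_equiv (quotientEquivAnnihilator H)]
        rfl
    _ = ∑ χ : AddChar (A ⧸ H) ℂ, χ a := by
        rw [← finsum_eq_sum_of_fintype, ← finsum_comp_equiv (unitsEquiv (M := ℂ))]
        rfl
    _ = _ := by
        simp [sum_apply_eq_ite, QuotientAddGroup.eq_zero_iff, Nat.card_eq_fintype_card]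

end AddChar

open AddChar

lemma finsum_mem_annihilator_fourierTransform {A V : Type*} [AddCommGroup A] [Fintype A]
    [AddCommGroup V] [Module ℂ V] (H : AddSubgroup A) (f : A → V) :
    ∑ᶠ π ∈ annihilator (M := ℂˣ) H, fourierTransform f π =
      (Nat.card (A ⧸ H) : ℂ) • ∑ᶠ h ∈ (H : Set A), f h := by
  classical
  have : Fintype (AddChar A ℂˣ) := Fintype.ofEquiv _ unitsEquiv.symm
  calc ∑ᶠ π ∈ annihilator (M := ℂˣ) H, fourierTransform f π
      = ∑ a, (∑ᶠ π ∈ annihilator (M := ℂˣ) H, (π a : ℂ)) • f a := by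
        simp only [finsum_mem_eq_toFinset_sum, fourierTransform, Finset.sum_smul]
        exact Finset.sum_comm
    _ = ∑ a, (if a ∈ H then (Nat.card (A ⧸ H) : ℂ) else 0) • f a := by
        simp only [finsum_mem_annihilator_apply]
    _ = _ := by
        rw [finsum_mem_eq_toFinset_sum, ← Set.filter_mem_univ_eq_toFinset, Finset.sum_filter,
          Finset.smul_sum]
        simp only [SetLike.mem_coe, smul_ite, smul_zero, ite_smul, zero_smul]

/-- Poisson summation formula: the sum of `f` over a subgroup `H ⊆ A` equals
`(|H|/|A|)` times the sum of the Fourier transform `f̂` over the annihilator `(Â : H)`. -/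
theorem poisson_summation {A : Type*} [AddCommGroup A] [Fintype A]
    {V : Type*} [AddCommGroup V] [Module ℂ V] (H : AddSubgroup A) (f : A → V) :
    ∑ᶠ h ∈ (H : Set A), f h =
      ((Nat.card H : ℂ) / (Nat.card A : ℂ)) •
        ∑ᶠ π ∈ {π : AddChar A ℂˣ | ∀ h ∈ H, π h = 1}, fourierTransform f π := by
  have hcard : (Nat.card A : ℂ) = Nat.card H * Nat.card (A ⧸ H) := by
    exact_mod_cast H.card_eq_card_quotient_mul_card_addSubgroup.trans (mul_comm _ _)
  have hH : (Nat.card H : ℂ) ≠ 0 := Nat.cast_ne_zero.2 Nat.card_pos.ne'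
  have hQ : (Nat.card (A ⧸ H) : ℂ) ≠ 0 := Nat.cast_ne_zero.2 Nat.card_pos.ne'
  rw [← annihilator, finsum_mem_annihilator_fourierTransform, smul_smul, hcard,
    div_mul_cancel_left₀ hH, inv_mul_cancel₀ hQ, one_smul]
end

section
/- Let R be a finite ring, not necessarily having a multiplicative identity (a finite non-unital ring). Suppose there exists a character χ of the additive group of R (a group homomorphism χ : R → ℂˣ) such that the map R → R̂ sending r to the character s ↦ χ(rs) is bijective. Then R has a multiplicative identity: there exists e ∈ R with e * r = r and r * e = r for all r ∈ R. The same conclusion holds if instead the map r ↦ (s ↦ χ(sr)) is bijective. -/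
/-!
Write `λ r = χ(r ·)` and `ρ r = χ(· r)`. If `λ` is surjective then `ρ` is injective, since
`ρ a = ρ b` says that every character `λ s` is trivial at `a - b`, and characters separate
points; as `|R| = |R̂|`, `ρ` is then bijective as well, and symmetrically. A preimage `e` of `χ`
under `λ` satisfies `λ (e r) = λ r`, so `e` is a left identity; likewise a preimage of `χ`
under `ρ` is a right identity, and the two coincide.
-/

open Function

namespace AddChar

lemma eq_zero_of_forall_units_apply_eq_one {G : Type*} [AddCommGroup G] [Finite G] {a : G}
    (h : ∀ ψ : AddChar G ℂˣ, ψ a = 1) : a = 0 :=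
  forall_apply_eq_zero.mp fun ψ => by
    simpa using congrArg Units.val (h (toMonoidHomEquiv.symm ψ.toMonoidHom.toHomUnits))

lemma injective_compAddMonoidHom_flip_of_surjective {M N P : Type*} [AddMonoid M]
    [AddCommGroup N] [Finite N] [AddCommGroup P] (χ : AddChar P ℂˣ) (m : M →+ N →+ P)
    (hm : Surjective fun x : M => χ.compAddMonoidHom (m x)) :
    Injective fun y : N => χ.compAddMonoidHom (m.flip y) := by
  intro a b hab
  rw [← sub_eq_zero]
  refine eq_zero_of_forall_units_apply_eq_one fun ψ => ?_
  obtain ⟨x, rfl⟩ := hm ψ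
  have hx : χ (m x a) = χ (m x b) := DFunLike.congr_fun hab x
  simp [map_sub_eq_div, hx]

end AddChar

section

variable {R : Type*} [NonUnitalRing R] (χ : AddChar R ℂˣ)

lemma bijective_mulRight_of_bijective_mulLeft [Finite R]
    (h : Bijective fun r : R => χ.compAddMonoidHom (AddMonoidHom.mulLeft r)) :
    Bijective fun r : R => χ.compAddMonoidHom (AddMonoidHom.mulRight r) :=
  have := Finite.of_surjective _ h.2
  (χ.injective_compAddMonoidHom_flip_of_surjective AddMonoidHom.mul h.2).bijective_of_nat_card_le
    (Nat.card_eq_of_bijective _ h).ge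

lemma bijective_mulLeft_of_bijective_mulRight [Finite R]
    (h : Bijective fun r : R => χ.compAddMonoidHom (AddMonoidHom.mulRight r)) :
    Bijective fun r : R => χ.compAddMonoidHom (AddMonoidHom.mulLeft r) :=
  have := Finite.of_surjective _ h.2
  (χ.injective_compAddMonoidHom_flip_of_surjective AddMonoidHom.mul.flip
    h.2).bijective_of_nat_card_le (Nat.card_eq_of_bijective _ h).ge

lemma exists_leftIdentity_of_bijective_mulLeft
    (h : Bijective fun r : R => χ.compAddMonoidHom (AddMonoidHom.mulLeft r)) :
    ∃ e : R, ∀ r : R, e * r = r := by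
  obtain ⟨e, he⟩ := h.2 χ
  refine ⟨e, fun r => h.1 (DFunLike.ext _ _ fun s => ?_)⟩
  simpa [mul_assoc] using DFunLike.congr_fun he (r * s)

lemma exists_rightIdentity_of_bijective_mulRight
    (h : Bijective fun r : R => χ.compAddMonoidHom (AddMonoidHom.mulRight r)) :
    ∃ e : R, ∀ r : R, r * e = r := by
  obtain ⟨e, he⟩ := h.2 χ
  refine ⟨e, fun r => h.1 (DFunLike.ext _ _ fun s => ?_)⟩
  simpa [mul_assoc] using DFunLike.congr_fun he (s * r)

end

/-- If a finite (possibly non-unital) ring `R` has an additive character `χ` such that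
`r ↦ (s ↦ χ(rs))` (or `r ↦ (s ↦ χ(sr))`) is a bijection from `R` to the character group
of `(R,+)`, then `R` has a multiplicative identity. -/
theorem generating_character_gives_identity {R : Type*} [NonUnitalRing R] [Finite R]
    (χ : AddChar R ℂˣ)
    (h : Function.Bijective
          (fun r : R => χ.compAddMonoidHom (AddMonoidHom.mulLeft r)) ∨
         Function.Bijective
          (fun r : R => χ.compAddMonoidHom (AddMonoidHom.mulRight r))) :
    ∃ e : R, ∀ r : R, e * r = r ∧ r * e = r := by
  obtain ⟨hl, hr⟩ : (Bijective fun r : R => χ.compAddMonoidHom (AddMonoidHom.mulLeft r)) ∧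
      Bijective fun r : R => χ.compAddMonoidHom (AddMonoidHom.mulRight r) := by
    rcases h with hl | hr
    exacts [⟨hl, bijective_mulRight_of_bijective_mulLeft χ hl⟩,
      ⟨bijective_mulLeft_of_bijective_mulRight χ hr, hr⟩]
  obtain ⟨e, he⟩ := exists_leftIdentity_of_bijective_mulLeft χ hl
  obtain ⟨f, hf⟩ := exists_rightIdentity_of_bijective_mulRight χ hr
  have hef : e = f := (hf e).symm.trans (he f)
  exact ⟨e, fun r => ⟨he r, hef ▸ hf r⟩⟩
end
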